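/- arXiv:2003.12268 — 4 statements merged into one kernel-verified Lean document; each statement's English description precedes it below -/
import Mathlib

section
/- Let f : ℝ × ℝ → ℝ be continuously differentiable and let t₀, α, h ∈ ℝ be fixed. Define T : ℝ × ℝ → ℝ × ℝ by T(x, v) = (x₂, v₂), where v₁ = v + (h/2)·f(x, t₀ + α·h), x₂ = x + h·v₁, and v₂ = v₁ + (h/2)·f(x₂, t₀ + (1 − α)·h). Then T is differentiable at every point and the determinant of its Fréchet derivative equals 1 at every point; in particular the second-order method (4.1) preserves area on ℝ². -/
open MeasureTheory

/-! The map is the kick–drift–kick splitting `T = K₂ ∘ D ∘ K₁`, where the kicks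
`K_i (x, v) = (x, v + g_i x)` and the drift `D (x, v) = (x + h v, v)` are shears. A shear has a
unipotent triangular derivative and, by Fubini, preserves Lebesgue measure, since on each fibre
it is a translation; both properties pass to compositions. -/

def verticalShear {α β : Type*} [Add β] (g : α → β) (p : α × β) : α × β :=
  (p.1, p.2 + g p.1)

def horizontalShear {α β : Type*} [Add α] (g : β → α) (p : α × β) : α × β :=
  (p.1 + g p.2, p.2)

section Measure

variable {α G : Type*} [MeasurableSpace α] [MeasurableSpace G] [AddGroup G] [MeasurableAdd₂ G]
  {μ : Measure α} {ν : Measure G} [SFinite μ] [SFinite ν] [ν.IsAddRightInvariant] {g : α → G}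

theorem measurePreserving_verticalShear (hg : Measurable g) :
    MeasurePreserving (verticalShear g) (μ.prod ν) (μ.prod ν) :=
  (MeasurePreserving.id μ).skew_product (g := fun x y => y + g x)
    (measurable_snd.add (hg.comp measurable_fst))
    (ae_of_all _ fun x => (measurePreserving_add_right ν (g x)).map_eq)

/-- A horizontal shear is, definitionally, a vertical one conjugated by `Prod.swap`. -/
theorem measurePreserving_horizontalShear (hg : Measurable g) :
    MeasurePreserving (horizontalShear g) (ν.prod μ) (ν.prod μ) :=
  Measure.measurePreserving_swap.comp
    ((measurePreserving_verticalShear hg).comp Measure.measurePreserving_swap)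

end Measure

section Derivative

open ContinuousLinearMap

variable {𝕜 : Type*} [NontriviallyNormedField 𝕜]

theorem ContinuousLinearMap.det_prod_self (A : 𝕜 × 𝕜 →L[𝕜] 𝕜 × 𝕜) :
    A.det = (A (1, 0)).1 * (A (0, 1)).2 - (A (0, 1)).1 * (A (1, 0)).2 := by
  change LinearMap.det (A : 𝕜 × 𝕜 →ₗ[𝕜] 𝕜 × 𝕜) = _
  rw [← LinearMap.det_toMatrix (Module.Basis.finTwoProd 𝕜), Matrix.det_fin_two]
  simp [LinearMap.toMatrix_apply, Module.Basis.finTwoProd]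

theorem det_fderiv_comp {E : Type*} [NormedAddCommGroup E] [NormedSpace 𝕜 E]
    [FiniteDimensional 𝕜 E] {f g : E → E} {x : E}
    (hf : DifferentiableAt 𝕜 f (g x)) (hg : DifferentiableAt 𝕜 g x) :
    (fderiv 𝕜 (f ∘ g) x).det = (fderiv 𝕜 f (g x)).det * (fderiv 𝕜 g x).det := by
  rw [fderiv_comp x hf hg]
  exact LinearMap.det_comp _ _

variable {g : 𝕜 → 𝕜} {g' : 𝕜} {p : 𝕜 × 𝕜}

theorem HasDerivAt.hasFDerivAt_verticalShear (hg : HasDerivAt g g' p.1) :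
    HasFDerivAt (verticalShear g) ((fst 𝕜 𝕜 𝕜).prod (snd 𝕜 𝕜 𝕜 + g' • fst 𝕜 𝕜 𝕜)) p :=
  hasFDerivAt_fst.prodMk (hasFDerivAt_snd.add (hg.comp_hasFDerivAt p hasFDerivAt_fst))

theorem HasDerivAt.hasFDerivAt_horizontalShear (hg : HasDerivAt g g' p.2) :
    HasFDerivAt (horizontalShear g) ((fst 𝕜 𝕜 𝕜 + g' • snd 𝕜 𝕜 𝕜).prod (snd 𝕜 𝕜 𝕜)) p :=
  (hasFDerivAt_fst.add (hg.comp_hasFDerivAt p hasFDerivAt_snd)).prodMk hasFDerivAt_snd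

theorem DifferentiableAt.verticalShear (hg : DifferentiableAt 𝕜 g p.1) :
    DifferentiableAt 𝕜 (verticalShear g) p :=
  hg.hasDerivAt.hasFDerivAt_verticalShear.differentiableAt

theorem DifferentiableAt.horizontalShear (hg : DifferentiableAt 𝕜 g p.2) :
    DifferentiableAt 𝕜 (horizontalShear g) p :=
  hg.hasDerivAt.hasFDerivAt_horizontalShear.differentiableAt

theorem det_fderiv_verticalShear (hg : DifferentiableAt 𝕜 g p.1) :
    (fderiv 𝕜 (verticalShear g) p).det = 1 := by
  rw [hg.hasDerivAt.hasFDerivAt_verticalShear.fderiv, det_prod_self]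
  simp

theorem det_fderiv_horizontalShear (hg : DifferentiableAt 𝕜 g p.2) :
    (fderiv 𝕜 (horizontalShear g) p).det = 1 := by
  rw [hg.hasDerivAt.hasFDerivAt_horizontalShear.fderiv, det_prod_self]
  simp

end Derivative

/-- Method (4.1): with `v₁ = v + (h/2)·f(x, t₀ + α·h)`, `x₂ = x + h·v₁`,
`v₂ = v₁ + (h/2)·f(x₂, t₀ + (1-α)·h)`, the one-step map `T (x, v) = (x₂, v₂)`
is everywhere differentiable, has Jacobian determinant 1 everywhere, and preserves
area (Lebesgue measure) on `ℝ²`. -/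
theorem deVogelaere_method_4_1_area_preserving
    (f : ℝ × ℝ → ℝ) (hf : ContDiff ℝ 1 f) (t₀ α h : ℝ)
    (T : ℝ × ℝ → ℝ × ℝ)
    (hT : ∀ x v : ℝ,
      T (x, v) =
        (x + h * (v + h / 2 * f (x, t₀ + α * h)),
         (v + h / 2 * f (x, t₀ + α * h)) +
           h / 2 * f (x + h * (v + h / 2 * f (x, t₀ + α * h)), t₀ + (1 - α) * h))) :
    (∀ p : ℝ × ℝ, DifferentiableAt ℝ T p) ∧
    (∀ p : ℝ × ℝ, (fderiv ℝ T p).det = 1) ∧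
    MeasurePreserving T volume volume := by
  set kick : ℝ → ℝ → ℝ := fun s x => h / 2 * f (x, s)
  have hfd : Differentiable ℝ f := hf.differentiable one_ne_zero
  have hkick : ∀ s, Differentiable ℝ (kick s) := fun s => by fun_prop
  have hsplit : T = verticalShear (kick (t₀ + (1 - α) * h)) ∘ horizontalShear (h * ·) ∘
      verticalShear (kick (t₀ + α * h)) :=
    funext fun ⟨x, v⟩ => hT x v
  have hdrift : Differentiable ℝ (h * · : ℝ → ℝ) := by fun_prop
  subst hsplit
  refine ⟨fun p => ?_, fun p => ?_, ?_⟩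
  · exact ((hkick _ _).verticalShear.comp p ((hdrift _).horizontalShear.comp p
      (hkick _ _).verticalShear))
  · rw [det_fderiv_comp (hkick _ _).verticalShear
      ((hdrift _).horizontalShear.comp p (hkick _ _).verticalShear),
      det_fderiv_comp (hdrift _).horizontalShear (hkick _ _).verticalShear,
      det_fderiv_verticalShear (hkick _ _), det_fderiv_horizontalShear (hdrift _),
      det_fderiv_verticalShear (hkick _ _)]
    norm_num
  · rw [Measure.volume_eq_prod]
    exact (measurePreserving_verticalShear (hkick _).continuous.measurable).comp
      ((measurePreserving_horizontalShear hdrift.continuous.measurable).comp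
        (measurePreserving_verticalShear (hkick _).continuous.measurable))
end

section
/- Let f : ℝ × ℝ → ℝ be twice continuously differentiable, α ∈ ℝ, and let x : ℝ → ℝ be four times continuously differentiable on a neighborhood of t₀ with x''(t) = f(x(t), t) there. Write x₀ = x(t₀), v₀ = x'(t₀), and for each h set v̄₁(h) = v₀ + (h/2)·f(x₀, t₀ + α·h), x̄₂(h) = x₀ + h·v̄₁(h), v̄₂(h) = v̄₁(h) + (h/2)·f(x̄₂(h), t₀ + (1 − α)·h). Then, as h → 0, v̄₂(h) − x'(t₀ + h) = [ (1/12)·∂₁₁f·v₀² + (1/6 − α/2)·∂₁₂f·v₀ + ((α² − α)/2 + 1/12)·∂₂₂f + (1/12)·f·∂₁f ]·h³ + o(h³), where all derivatives of f are evaluated at (x₀, t₀) and ∂₁, ∂₂ denote partial derivatives with respect to the first and second argument of f. -/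
/-!
Both sides are expanded in powers of `h` by Peano-form Taylor expansions. The method gives
`v̄₂(h) = v₀ + (h/2)·(g₁(h) + g₂(h))`, where `g₁`, `g₂` are `f` along the curves
`h ↦ (x₀, t₀ + αh)` and `h ↦ (x̄₂(h), t₀ + (1 − α)h)`; each is expanded to second order by the
second-order chain rule. On the solution side, `x'' = f(x, t)` is expanded to second order in the
same way and integrated once, giving `x'(t₀ + h)` to third order. The coefficients of `1`, `h`,
`h²` agree, and by symmetry of the mixed partials of `f` the `h³` coefficients differ by the
stated bracket.
-/

open Asymptotics Filter Topology

noncomputable def partialFst (g : ℝ × ℝ → ℝ) (p : ℝ × ℝ) : ℝ := fderiv ℝ g p (1, 0)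

noncomputable def partialSnd (g : ℝ × ℝ → ℝ) (p : ℝ × ℝ) : ℝ := fderiv ℝ g p (0, 1)

local notation "∂₁" => partialFst
local notation "∂₂" => partialSnd

section Partial

variable {g : ℝ × ℝ → ℝ}

theorem ContDiff.partialFst {m n : WithTop ℕ∞} (hg : ContDiff ℝ n g) (hmn : m + 1 ≤ n) :
    ContDiff ℝ m (∂₁ g) :=
  (hg.fderiv_right hmn).clm_apply contDiff_const

theorem ContDiff.partialSnd {m n : WithTop ℕ∞} (hg : ContDiff ℝ n g) (hmn : m + 1 ≤ n) :
    ContDiff ℝ m (∂₂ g) :=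
  (hg.fderiv_right hmn).clm_apply contDiff_const

theorem DifferentiableAt.hasDerivAt_comp_prodMk {a b : ℝ → ℝ} {a' b' t : ℝ}
    (hg : DifferentiableAt ℝ g (a t, b t)) (ha : HasDerivAt a a' t) (hb : HasDerivAt b b' t) :
    HasDerivAt (fun u => g (a u, b u))
      (a' * ∂₁ g (a t, b t) + b' * ∂₂ g (a t, b t)) t := by
  refine (hg.hasFDerivAt.comp_hasDerivAt t (ha.prodMk hb)).congr_deriv ?_
  have hv : ((a', b') : ℝ × ℝ) = a' • ((1 : ℝ), (0 : ℝ)) + b' • ((0 : ℝ), (1 : ℝ)) := by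
    simp
  rw [hv, map_add, map_smul, map_smul, smul_eq_mul, smul_eq_mul]
  rfl

theorem DifferentiableAt.deriv_comp_prodMk_left {a b : ℝ} (hg : DifferentiableAt ℝ g (a, b)) :
    deriv (fun u => g (u, b)) a = ∂₁ g (a, b) := by
  simpa using (hg.hasDerivAt_comp_prodMk (hasDerivAt_id a) (hasDerivAt_const a b)).deriv

theorem DifferentiableAt.deriv_comp_prodMk_right {a b : ℝ} (hg : DifferentiableAt ℝ g (a, b)) :
    deriv (fun u => g (a, u)) b = ∂₂ g (a, b) := by
  simpa using (hg.hasDerivAt_comp_prodMk (hasDerivAt_const b a) (hasDerivAt_id b)).deriv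

theorem partialSnd_partialFst {p : ℝ × ℝ} (hg : ContDiffAt ℝ 2 g p) :
    ∂₂ (∂₁ g) p = ∂₁ (∂₂ g) p := by
  have hF : DifferentiableAt ℝ (fderiv ℝ g) p :=
    (hg.fderiv_right (m := 1) le_rfl).differentiableAt one_ne_zero
  have hfderiv (v : ℝ × ℝ) :
      fderiv ℝ (fun q => fderiv ℝ g q v) p = (fderiv ℝ (fderiv ℝ g) p).flip v := by
    simpa using fderiv_clm_apply hF (differentiableAt_const v)
  change fderiv ℝ (fun q => fderiv ℝ g q (1, 0)) p (0, 1)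
    = fderiv ℝ (fun q => fderiv ℝ g q (0, 1)) p (1, 0)
  rw [hfderiv, hfderiv, ContinuousLinearMap.flip_apply, ContinuousLinearMap.flip_apply]
  exact hg.isSymmSndFDerivAt (by simp) _ _

end Partial

theorem isLittleO_pow_succ_of_hasDerivAt {E : Type*} [NormedAddCommGroup E] [NormedSpace ℝ E]
    {ψ ψ' : ℝ → E} {t₀ : ℝ} {n : ℕ} (hψ : ∀ᶠ t in 𝓝 t₀, HasDerivAt ψ (ψ' t) t)
    (hψ' : ψ' =o[𝓝 t₀] fun t => (t - t₀) ^ n) :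
    (fun t => ψ t - ψ t₀) =o[𝓝 t₀] fun t => (t - t₀) ^ (n + 1) := by
  obtain ⟨ε, hε, hball⟩ := Metric.eventually_nhds_iff_ball.1 hψ
  have hnhds : 𝓝[Metric.ball t₀ ε] t₀ = 𝓝 t₀ := nhdsWithin_eq_nhds.2 (Metric.ball_mem_nhds t₀ hε)
  have := (convex_ball t₀ ε).isLittleO_pow_succ_real (Metric.mem_ball_self hε)
    (fun t ht => (hball t ht).hasDerivWithinAt) (hnhds ▸ hψ')
  rwa [hnhds] at this

theorem isLittleO_sub_quadratic_of_hasDerivAt {ψ ψ' : ℝ → ℝ} {c₁ c₂ t₀ : ℝ}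
    (hψ : ∀ᶠ t in 𝓝 t₀, HasDerivAt ψ (ψ' t) t)
    (hψ' : (fun t => ψ' t - (c₁ + c₂ * (t - t₀))) =o[𝓝 t₀] fun t => (t - t₀) ^ 1) :
    (fun t => ψ t - (ψ t₀ + c₁ * (t - t₀) + c₂ / 2 * (t - t₀) ^ 2))
      =o[𝓝 t₀] fun t => (t - t₀) ^ 2 := by
  have hpoly (t : ℝ) : HasDerivAt (fun t => ψ t₀ + c₁ * (t - t₀) + c₂ / 2 * (t - t₀) ^ 2)
      (c₁ + c₂ * (t - t₀)) t := by
    have h := (hasDerivAt_id' t).sub_const t₀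
    exact (((h.const_mul c₁).const_add _).fun_add ((h.fun_pow 2).const_mul (c₂ / 2))).congr_deriv
      (by ring)
  simpa using isLittleO_pow_succ_of_hasDerivAt (hψ.mono fun t ht => ht.sub (hpoly t)) hψ'

theorem isLittleO_sub_cubic_of_hasDerivAt {ψ ψ' : ℝ → ℝ} {c₁ c₂ c₃ t₀ : ℝ}
    (hψ : ∀ᶠ t in 𝓝 t₀, HasDerivAt ψ (ψ' t) t)
    (hψ' : (fun t => ψ' t - (c₁ + c₂ * (t - t₀) + c₃ / 2 * (t - t₀) ^ 2))
      =o[𝓝 t₀] fun t => (t - t₀) ^ 2) :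
    (fun t => ψ t - (ψ t₀ + c₁ * (t - t₀) + c₂ / 2 * (t - t₀) ^ 2 + c₃ / 6 * (t - t₀) ^ 3))
      =o[𝓝 t₀] fun t => (t - t₀) ^ 3 := by
  have hpoly (t : ℝ) : HasDerivAt
      (fun t => ψ t₀ + c₁ * (t - t₀) + c₂ / 2 * (t - t₀) ^ 2 + c₃ / 6 * (t - t₀) ^ 3)
      (c₁ + c₂ * (t - t₀) + c₃ / 2 * (t - t₀) ^ 2) t := by
    have h := (hasDerivAt_id' t).sub_const t₀
    exact ((((h.const_mul c₁).const_add _).fun_add ((h.fun_pow 2).const_mul (c₂ / 2))).fun_add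
      ((h.fun_pow 3).const_mul (c₃ / 6))).congr_deriv (by ring)
  simpa using isLittleO_pow_succ_of_hasDerivAt (hψ.mono fun t ht => ht.sub (hpoly t)) hψ'

theorem taylor_two_of_hasDerivAt {φ φ' : ℝ → ℝ} {φ'' t₀ : ℝ}
    (hφ : ∀ᶠ t in 𝓝 t₀, HasDerivAt φ (φ' t) t) (hφ' : HasDerivAt φ' φ'' t₀) :
    (fun t => φ t - (φ t₀ + φ' t₀ * (t - t₀) + φ'' / 2 * (t - t₀) ^ 2))
      =o[𝓝 t₀] fun t => (t - t₀) ^ 2 :=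
  isLittleO_sub_quadratic_of_hasDerivAt hφ <| (hasDerivAt_iff_isLittleO.1 hφ').congr
    (fun t => by simp only [smul_eq_mul]; ring) (fun t => (pow_one _).symm)

theorem taylor_two_comp_prodMk {g : ℝ × ℝ → ℝ} (hg : ContDiff ℝ 2 g) {a b a' b' : ℝ → ℝ}
    {a'' b'' t₀ : ℝ} (ha : ∀ᶠ t in 𝓝 t₀, HasDerivAt a (a' t) t)
    (hb : ∀ᶠ t in 𝓝 t₀, HasDerivAt b (b' t) t) (ha' : HasDerivAt a' a'' t₀)
    (hb' : HasDerivAt b' b'' t₀) :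
    (fun t => g (a t, b t) - (g (a t₀, b t₀)
      + (a' t₀ * ∂₁ g (a t₀, b t₀) + b' t₀ * ∂₂ g (a t₀, b t₀)) * (t - t₀)
      + (a'' * ∂₁ g (a t₀, b t₀) + b'' * ∂₂ g (a t₀, b t₀)
          + a' t₀ ^ 2 * ∂₁ (∂₁ g) (a t₀, b t₀) + 2 * a' t₀ * b' t₀ * ∂₂ (∂₁ g) (a t₀, b t₀)
          + b' t₀ ^ 2 * ∂₂ (∂₂ g) (a t₀, b t₀)) / 2 * (t - t₀) ^ 2))
      =o[𝓝 t₀] fun t => (t - t₀) ^ 2 := by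
  have hg₁ : Differentiable ℝ (∂₁ g) := (hg.partialFst (m := 1) le_rfl).differentiable one_ne_zero
  have hg₂ : Differentiable ℝ (∂₂ g) := (hg.partialSnd (m := 1) le_rfl).differentiable one_ne_zero
  have hφ : ∀ᶠ t in 𝓝 t₀, HasDerivAt (fun t => g (a t, b t))
      (a' t * ∂₁ g (a t, b t) + b' t * ∂₂ g (a t, b t)) t :=
    (ha.and hb).mono fun t hab =>
      ((hg.differentiable two_ne_zero) _).hasDerivAt_comp_prodMk hab.1 hab.2
  have ha₀ := ha.self_of_nhds
  have hb₀ := hb.self_of_nhds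
  have hφ' := (ha'.mul ((hg₁ _).hasDerivAt_comp_prodMk ha₀ hb₀)).add
    (hb'.mul ((hg₂ _).hasDerivAt_comp_prodMk ha₀ hb₀))
  rw [← partialSnd_partialFst hg.contDiffAt] at hφ'
  exact (taylor_two_of_hasDerivAt hφ hφ').congr_left fun t => by ring

theorem taylor_three_of_secondOrderODE {f : ℝ × ℝ → ℝ} (hf : ContDiff ℝ 2 f)
    {z y : ℝ → ℝ} {t₀ : ℝ} (hz : ∀ᶠ t in 𝓝 t₀, HasDerivAt z (y t) t)
    (hy : ∀ᶠ t in 𝓝 t₀, HasDerivAt y (f (z t, t)) t) :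
    (fun t => y t - (y t₀ + f (z t₀, t₀) * (t - t₀)
      + (y t₀ * ∂₁ f (z t₀, t₀) + ∂₂ f (z t₀, t₀)) / 2 * (t - t₀) ^ 2
      + (f (z t₀, t₀) * ∂₁ f (z t₀, t₀) + y t₀ ^ 2 * ∂₁ (∂₁ f) (z t₀, t₀)
          + 2 * y t₀ * ∂₂ (∂₁ f) (z t₀, t₀) + ∂₂ (∂₂ f) (z t₀, t₀)) / 6 * (t - t₀) ^ 3))
      =o[𝓝 t₀] fun t => (t - t₀) ^ 3 := by
  refine isLittleO_sub_cubic_of_hasDerivAt hy ?_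
  have hφ := taylor_two_comp_prodMk hf hz (Eventually.of_forall hasDerivAt_id')
    hy.self_of_nhds (hasDerivAt_const t₀ 1)
  exact hφ.congr_left fun t => by ring

/-- `v̄₂(h)` of method (4.1), started from the state `(x₀, v₀)` at time `t₀`. -/
noncomputable def deVogelaereVelocity (f : ℝ × ℝ → ℝ) (α t₀ x₀ v₀ h : ℝ) : ℝ :=
  let v₁ := v₀ + h / 2 * f (x₀, t₀ + α * h)
  v₁ + h / 2 * f (x₀ + h * v₁, t₀ + (1 - α) * h)

theorem deVogelaereVelocity_taylor {f : ℝ × ℝ → ℝ} (hf : ContDiff ℝ 2 f) (α t₀ x₀ v₀ : ℝ) :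
    (fun h => deVogelaereVelocity f α t₀ x₀ v₀ h - (v₀ + f (x₀, t₀) * h
      + (v₀ * ∂₁ f (x₀, t₀) + ∂₂ f (x₀, t₀)) / 2 * h ^ 2
      + (f (x₀, t₀) * ∂₁ f (x₀, t₀) + v₀ ^ 2 * ∂₁ (∂₁ f) (x₀, t₀)
          + 2 * (1 - α) * v₀ * ∂₂ (∂₁ f) (x₀, t₀)
          + (α ^ 2 + (1 - α) ^ 2) * ∂₂ (∂₂ f) (x₀, t₀)) / 4 * h ^ 3))
      =o[𝓝 0] fun h => h ^ 3 := by
  have hfd : Differentiable ℝ f := hf.differentiable two_ne_zero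
  have hf₂ : Differentiable ℝ (∂₂ f) :=
    (hf.partialSnd (m := 1) le_rfl).differentiable one_ne_zero
  have hτ (c h : ℝ) : HasDerivAt (fun h => t₀ + c * h) c h := (hasDerivAt_const_mul c).const_add t₀
  set g₁ : ℝ → ℝ := fun h => f (x₀, t₀ + α * h)
  set g₁' : ℝ → ℝ := fun h => α * ∂₂ f (x₀, t₀ + α * h)
  have hg₁ (h : ℝ) : HasDerivAt g₁ (g₁' h) h :=
    ((hfd _).hasDerivAt_comp_prodMk (hasDerivAt_const h x₀) (hτ α h)).congr_deriv (by ring)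
  have hg₁' : HasDerivAt g₁' (α * (α * ∂₂ (∂₂ f) (x₀, t₀))) 0 := by
    simpa using ((hf₂ _).hasDerivAt_comp_prodMk (hasDerivAt_const 0 x₀) (hτ α 0)).const_mul α
  set X : ℝ → ℝ := fun h => x₀ + h * (v₀ + h / 2 * g₁ h)
  set X' : ℝ → ℝ := fun h => v₀ + h * g₁ h + h ^ 2 / 2 * g₁' h
  have hX (h : ℝ) : HasDerivAt X (X' h) h :=
    (((hasDerivAt_id' h).fun_mul ((((hasDerivAt_id' h).div_const 2).fun_mul (hg₁ h)).const_add
      v₀)).const_add x₀).congr_deriv (by ring)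
  have hX' : HasDerivAt X' (g₁ 0) 0 := by
    simpa using (((hasDerivAt_id' 0).fun_mul (hg₁ 0)).const_add v₀).fun_add
      (((hasDerivAt_pow 2 0).div_const 2).fun_mul hg₁')
  have e₁ := taylor_two_comp_prodMk hf (Eventually.of_forall fun h => hasDerivAt_const h x₀)
    (Eventually.of_forall (hτ α)) (hasDerivAt_const 0 0) (hasDerivAt_const 0 α)
  have e₂ := taylor_two_comp_prodMk hf (Eventually.of_forall hX)
    (Eventually.of_forall (hτ (1 - α))) hX' (hasDerivAt_const 0 (1 - α))
  have hhalf : (fun h : ℝ => h / 2) =O[𝓝 0] fun h => h :=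
    (isBigO_refl _ _).const_mul_left (1 / 2) |>.congr_left fun h => by ring
  refine ((hhalf.mul_isLittleO (e₁.add e₂)).congr (fun h => ?_) fun h => by ring)
  simp only [deVogelaereVelocity, X, X', g₁, g₁', mul_zero, add_zero, zero_mul, zero_add,
    sub_zero, ne_eq, OfNat.ofNat_ne_zero, not_false_eq_true, zero_pow, zero_div]
  ring

/-- Local velocity error of method (4.1): with
`v̄₁(h) = v₀ + (h/2)·f(x₀, t₀ + α·h)`, `x̄₂(h) = x₀ + h·v̄₁(h)`,
`v̄₂(h) = v̄₁(h) + (h/2)·f(x̄₂(h), t₀ + (1 − α)·h)`, one has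
`v̄₂(h) − x'(t₀ + h) = [(1/12)·∂₁₁f·v₀² + (1/6 − α/2)·∂₁₂f·v₀
  + ((α² − α)/2 + 1/12)·∂₂₂f + (1/12)·f·∂₁f]·h³ + o(h³)`,
all derivatives of `f` evaluated at `(x₀, t₀)`. -/
theorem deVogelaere_method_4_1_velocity_error
    (f : ℝ × ℝ → ℝ) (hf : ContDiff ℝ 2 f) (α t₀ : ℝ)
    (x : ℝ → ℝ) (s : Set ℝ) (hs : s ∈ nhds t₀)
    (hx : ContDiffOn ℝ 4 x s)
    (hode : ∀ t ∈ s, deriv (deriv x) t = f (x t, t))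
    (v₁ x₂ v₂ : ℝ → ℝ)
    (hv₁ : ∀ h : ℝ, v₁ h = deriv x t₀ + h / 2 * f (x t₀, t₀ + α * h))
    (hx₂ : ∀ h : ℝ, x₂ h = x t₀ + h * v₁ h)
    (hv₂ : ∀ h : ℝ, v₂ h = v₁ h + h / 2 * f (x₂ h, t₀ + (1 - α) * h)) :
    (fun h : ℝ =>
        v₂ h - deriv x (t₀ + h)
          - ((1 / 12) * deriv (fun u => deriv (fun u' => f (u', t₀)) u) (x t₀)
                * (deriv x t₀) ^ 2
              + (1 / 6 - α / 2) * deriv (fun t => deriv (fun u => f (u, t)) (x t₀)) t₀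
                * deriv x t₀
              + ((α ^ 2 - α) / 2 + 1 / 12)
                * deriv (fun t => deriv (fun t' => f (x t₀, t')) t) t₀
              + (1 / 12) * f (x t₀, t₀) * deriv (fun u => f (u, t₀)) (x t₀)) * h ^ 3)
      =o[nhds 0] fun h : ℝ => h ^ 3 := by
  have hfd : Differentiable ℝ f := hf.differentiable two_ne_zero
  have hf₁ : Differentiable ℝ (∂₁ f) := (hf.partialFst (m := 1) le_rfl).differentiable one_ne_zero
  have hf₂ : Differentiable ℝ (∂₂ f) := (hf.partialSnd (m := 1) le_rfl).differentiable one_ne_zero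
  simp only [fun a b => (hfd (a, b)).deriv_comp_prodMk_left,
    fun a b => (hfd (a, b)).deriv_comp_prodMk_right,
    fun a b => (hf₁ (a, b)).deriv_comp_prodMk_left,
    fun a b => (hf₁ (a, b)).deriv_comp_prodMk_right,
    fun a b => (hf₂ (a, b)).deriv_comp_prodMk_right]
  have hsol : ∀ᶠ t in 𝓝 t₀, HasDerivAt x (deriv x t) t ∧ HasDerivAt (deriv x) (f (x t, t)) t := by
    filter_upwards [eventually_mem_nhds_iff.2 hs] with t ht
    have hxt := hx.contDiffAt ht
    refine ⟨(hxt.differentiableAt (by norm_num)).hasDerivAt, hode t (mem_of_mem_nhds ht) ▸ ?_⟩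
    exact ((hxt.derivWithin (m := 1) (by norm_num)).differentiableAt one_ne_zero).hasDerivAt
  have hsolution := (taylor_three_of_secondOrderODE hf (hsol.mono fun _ h => h.1)
    (hsol.mono fun _ h => h.2)).comp_tendsto
      ((continuous_const_add t₀).tendsto' 0 t₀ (add_zero t₀))
  have hmethod := deVogelaereVelocity_taylor hf α t₀ (x t₀) (deriv x t₀)
  have hv₂_eq (h : ℝ) : v₂ h = deVogelaereVelocity f α t₀ (x t₀) (deriv x t₀) h := by
    simp only [hv₂, hx₂, hv₁, deVogelaereVelocity]
  refine (hmethod.sub (hsolution.congr_right fun h => by simp)).congr_left fun h => ?_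
  simp only [Function.comp, hv₂_eq, add_sub_cancel_left]
  ring
end

section
/- Let f : ℝ × ℝ → ℝ be continuously differentiable and let t₀, h ∈ ℝ be fixed. Define T : ℝ × ℝ → ℝ × ℝ by T(x, v) = (x₂, v₂), where x₁ = x + (h/2)·v, v₂ = v + h·f(x₁, t₀ + h/2), and x₂ = x₁ + (h/2)·v₂. Then T is differentiable at every point and the determinant of its Fréchet derivative equals 1 at every point; in particular the second-order method (4.3) preserves area on ℝ². -/
/-!
The step factors as drift ∘ kick ∘ drift, where the drift `(x, v) ↦ (x + (h/2) v, v)` is a linear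
shear and the kick `(x, v) ↦ (x, v + h f(x, t₀ + h/2))` is a nonlinear shear. The Jacobian of a
kick is a lower-triangular shear matrix, so every factor has unit Jacobian determinant; and a
kick preserves Lebesgue measure by Fubini, since on each vertical line it is a translation.
-/

open MeasureTheory

theorem LinearMap.det_eq_finTwoProd {R : Type*} [CommRing R] (L : R × R →ₗ[R] R × R) :
    L.det = (L (1, 0)).1 * (L (0, 1)).2 - (L (0, 1)).1 * (L (1, 0)).2 := by
  rw [← LinearMap.det_toMatrix (Module.Basis.finTwoProd R), Matrix.det_fin_two]
  simp [LinearMap.toMatrix_apply]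

def kick {α G : Type*} [Add G] (g : α → G) (p : α × G) : α × G :=
  (p.1, p.2 + g p.1)

theorem measurePreserving_kick {α G : Type*} [MeasurableSpace α] [MeasurableSpace G] [Add G]
    [MeasurableAdd₂ G] {μ : Measure α} {ν : Measure G} [SFinite μ] [SFinite ν]
    [ν.IsAddRightInvariant] {g : α → G} (hg : Measurable g) :
    MeasurePreserving (kick g) (μ.prod ν) (μ.prod ν) :=
  (MeasurePreserving.id μ).skew_product (g := fun x v => v + g x)
    (measurable_snd.add (hg.comp measurable_fst))
    (.of_forall fun x => (measurePreserving_add_right ν (g x)).map_eq)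

section Plane

variable {R : Type*} [CommRing R] [TopologicalSpace R] [IsTopologicalRing R]

def shearX (a : R) : R × R →L[R] R × R :=
  (ContinuousLinearMap.fst R R R + a • ContinuousLinearMap.snd R R R).prod
    (ContinuousLinearMap.snd R R R)

def shearY (c : R) : R × R →L[R] R × R :=
  (ContinuousLinearMap.fst R R R).prod
    (ContinuousLinearMap.snd R R R + c • ContinuousLinearMap.fst R R R)

@[simp]
theorem shearX_apply (a : R) (p : R × R) : shearX a p = (p.1 + a * p.2, p.2) := rfl

@[simp]
theorem shearY_apply (c : R) (p : R × R) : shearY c p = (p.1, p.2 + c * p.1) := rfl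

@[simp]
theorem det_shearX (a : R) : (shearX a).det = 1 := by
  simp [LinearMap.det_eq_finTwoProd]

@[simp]
theorem det_shearY (c : R) : (shearY c).det = 1 := by
  simp [LinearMap.det_eq_finTwoProd]

end Plane

theorem shearX_eq_swap_kick_swap (a : ℝ) :
    ⇑(shearX a) = Prod.swap ∘ kick (a * ·) ∘ Prod.swap := by
  ext p <;> simp [kick]

theorem measurePreserving_shearX (a : ℝ) : MeasurePreserving (shearX a) := by
  rw [shearX_eq_swap_kick_swap, Measure.volume_eq_prod]
  exact Measure.measurePreserving_swap.comp
    ((measurePreserving_kick (measurable_const_mul a)).comp Measure.measurePreserving_swap)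

theorem hasFDerivAt_kick {g : ℝ → ℝ} {c : ℝ} {p : ℝ × ℝ} (hg : HasDerivAt g c p.1) :
    HasFDerivAt (kick g) (shearY c) p := by
  refine (hasFDerivAt_fst.prodMk
    (hasFDerivAt_snd.add (hg.hasFDerivAt.comp p hasFDerivAt_fst))).congr_fderiv ?_
  ext <;> simp

/-- Method (4.3): with `x₁ = x + (h/2)·v`, `v₂ = v + h·f(x₁, t₀ + h/2)`,
`x₂ = x₁ + (h/2)·v₂`, the one-step map `T (x, v) = (x₂, v₂)` is everywhere
differentiable, has Jacobian determinant 1 everywhere, and preserves area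
(Lebesgue measure) on `ℝ²`. -/
theorem deVogelaere_method_4_3_area_preserving
    (f : ℝ × ℝ → ℝ) (hf : ContDiff ℝ 1 f) (t₀ h : ℝ)
    (T : ℝ × ℝ → ℝ × ℝ)
    (hT : ∀ x v : ℝ,
      T (x, v) =
        ((x + h / 2 * v) + h / 2 * (v + h * f (x + h / 2 * v, t₀ + h / 2)),
         v + h * f (x + h / 2 * v, t₀ + h / 2))) :
    (∀ p : ℝ × ℝ, DifferentiableAt ℝ T p) ∧
    (∀ p : ℝ × ℝ, (fderiv ℝ T p).det = 1) ∧
    MeasurePreserving T volume volume := by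
  set g : ℝ → ℝ := fun x => h * f (x, t₀ + h / 2)
  have hT_split : T = shearX (h / 2) ∘ kick g ∘ shearX (h / 2) := by
    ext ⟨x, v⟩ <;> simp [hT, kick, g]
  have hg : Differentiable ℝ g :=
    ((hf.differentiable one_ne_zero).comp
      (differentiable_id.prodMk (differentiable_const _))).const_mul h
  have hT_deriv (p : ℝ × ℝ) : HasFDerivAt T
      ((shearX (h / 2)).comp ((shearY (deriv g (shearX (h / 2) p).1)).comp (shearX (h / 2)))) p := by
    rw [hT_split]
    exact (shearX _).hasFDerivAt.comp p
      ((hasFDerivAt_kick (hg _).hasDerivAt).comp p (shearX _).hasFDerivAt)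
  refine ⟨fun p => (hT_deriv p).differentiableAt, fun p => ?_, ?_⟩
  · simp [(hT_deriv p).fderiv, ContinuousLinearMap.det, LinearMap.det_comp]
  · rw [hT_split]
    exact (measurePreserving_shearX _).comp
      ((measurePreserving_kick hg.continuous.measurable).comp (measurePreserving_shearX _))
end

section
/- Let n ∈ ℕ, let H₁, H₂ : (EuclideanSpace ℝ (Fin n)) × (EuclideanSpace ℝ (Fin n)) → ℝ be twice continuously differentiable (these are H(·, ·, t₀ + α·h) and H(·, ·, t₀ + (1−α)·h) with the times frozen), let h ∈ ℝ, and denote by ∇₁ and ∇₂ gradients with respect to the first and second ℝⁿ argument. Suppose Φ = (Q, P) : ℝⁿ × ℝⁿ → ℝⁿ × ℝⁿ is differentiable and there exist differentiable maps q, p : ℝⁿ × ℝⁿ → ℝⁿ such that for all (α, β): q = α + (h/2)·∇₂H₁(q, β), p = β − (h/2)·∇₁H₁(q, β), P = p − (h/2)·∇₁H₂(q, P), and Q = q + (h/2)·∇₂H₂(q, P). Then Φ is a contact transformation: for every point z and all tangent vectors u, v in ℝⁿ × ℝⁿ, ω(DΦ(z)u, DΦ(z)v) = ω(u, v), where ω((a,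 b), (a', b')) = ⟨a, b'⟩ − ⟨b, a'⟩ is the standard symplectic form. -/
/-!
Each half step of (7.4) has the form `x ↦ x + s • X_{dH(m)}`, where `X_φ = (∇₂φ, -∇₁φ)` is the
Hamiltonian vector field of a covector, characterised by `ω(X_φ, ·) = φ`, and the point `m` mixes
new and old coordinates: `m = (q, β)` for the semi-implicit step, `m = (q, P)` for its adjoint.
Differentiating, a tangent vector `u` goes to `u' = u + s • X_{D²H(m) mᵤ}`, with `mᵤ` mixed in
the same way. Expanding `ω(u', v')` with `ω(X_φ, ·) = φ`, the change `ω(u', v') - ω(u, v)`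
collapses to `s • (D²H(m) mᵤ m_v - D²H(m) m_v mᵤ)`, which vanishes by Schwarz's theorem.
-/

open RealInnerProductSpace InnerProductSpace ContinuousLinearMap

section Symplectic

variable {E : Type*} [NormedAddCommGroup E] [InnerProductSpace ℝ E]

noncomputable def symplecticForm (x y : E × E) : ℝ := ⟪x.1, y.2⟫ - ⟪x.2, y.1⟫

variable [CompleteSpace E]

noncomputable def gradFst : ((E × E) →L[ℝ] ℝ) →L[ℝ] E :=
  (toDual ℝ E).symm.toContinuousLinearEquiv.toContinuousLinearMap ∘L
    (compL ℝ E (E × E) ℝ).flip (inl ℝ E E)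

noncomputable def gradSnd : ((E × E) →L[ℝ] ℝ) →L[ℝ] E :=
  (toDual ℝ E).symm.toContinuousLinearEquiv.toContinuousLinearMap ∘L
    (compL ℝ E (E × E) ℝ).flip (inr ℝ E E)

theorem inner_gradFst (φ : (E × E) →L[ℝ] ℝ) (a : E) : ⟪gradFst φ, a⟫ = φ (a, 0) :=
  toDual_symm_apply

theorem inner_gradSnd (φ : (E × E) →L[ℝ] ℝ) (b : E) : ⟪gradSnd φ, b⟫ = φ (0, b) :=
  toDual_symm_apply

theorem gradient_comp_prodMk_left {H : E × E → ℝ} {x y : E} (hH : DifferentiableAt ℝ H (x, y)) :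
    gradient (fun x' => H (x', y)) x = gradFst (fderiv ℝ H (x, y)) :=
  (hasFDerivAt_iff_hasGradientAt.mp
    (hH.hasFDerivAt.comp x (hasFDerivAt_prodMk_left x y))).gradient

theorem gradient_comp_prodMk_right {H : E × E → ℝ} {x y : E} (hH : DifferentiableAt ℝ H (x, y)) :
    gradient (fun y' => H (x, y')) y = gradSnd (fderiv ℝ H (x, y)) :=
  (hasFDerivAt_iff_hasGradientAt.mp
    (hH.hasFDerivAt.comp y (hasFDerivAt_prodMk_right x y))).gradient

noncomputable def hamiltonianVectorField : ((E × E) →L[ℝ] ℝ) →L[ℝ] E × E :=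
  gradSnd.prod (-gradFst)

theorem symplecticForm_hamiltonianVectorField (φ : (E × E) →L[ℝ] ℝ) (y : E × E) :
    symplecticForm (hamiltonianVectorField φ) y = φ y := by
  rw [symplecticForm, hamiltonianVectorField, prod_apply, neg_apply, inner_neg_left,
    sub_neg_eq_add, inner_gradFst, inner_gradSnd, ← map_add]
  simp only [Prod.mk_add_mk, zero_add, add_zero, Prod.mk.eta]

theorem prodMk_eq_add_smul_hamiltonianVectorField {H : E × E → ℝ} {m₁ m₂ : E}
    (hH : DifferentiableAt ℝ H (m₁, m₂)) {s : ℝ} {a : E × E} {x y : E}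
    (hx : x = a.1 + s • gradient (fun y' => H (m₁, y')) m₂)
    (hy : y = a.2 - s • gradient (fun x' => H (x', m₂)) m₁) :
    (x, y) = a + s • hamiltonianVectorField (fderiv ℝ H (m₁, m₂)) := by
  rw [hx, hy, gradient_comp_prodMk_right hH, gradient_comp_prodMk_left hH, sub_eq_add_neg,
    ← smul_neg]
  rfl

theorem symplecticForm_symplecticEuler_step {B : E × E →L[ℝ] (E × E) →L[ℝ] ℝ}
    (hB : ∀ x y, B x y = B y x) (s : ℝ) {u v u' v' : E × E}
    (hu : u' = u + s • hamiltonianVectorField (B (u'.1, u.2)))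
    (hv : v' = v + s • hamiltonianVectorField (B (v'.1, v.2))) :
    symplecticForm u' v' = symplecticForm u v := by
  set a := hamiltonianVectorField (B (u'.1, u.2))
  set b := hamiltonianVectorField (B (v'.1, v.2))
  have hsymm : ⟪a.1, v.2⟫ - ⟪a.2, v'.1⟫ = ⟪b.1, u.2⟫ - ⟪b.2, u'.1⟫ := by
    have := hB (u'.1, u.2) (v'.1, v.2)
    rwa [← symplecticForm_hamiltonianVectorField, ← symplecticForm_hamiltonianVectorField] at this
  have hu₁ : u'.1 = u.1 + s • a.1 := congrArg Prod.fst hu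
  have hu₂ : u'.2 = u.2 + s • a.2 := congrArg Prod.snd hu
  have hv₁ : v'.1 = v.1 + s • b.1 := congrArg Prod.fst hv
  have hv₂ : v'.2 = v.2 + s • b.2 := congrArg Prod.snd hv
  have e₁ : ⟪u'.1, v'.2⟫ = ⟪u.1, v.2⟫ + s * ⟪a.1, v.2⟫ + s * ⟪b.2, u'.1⟫ := by
    rw [hv₂, inner_add_right, real_inner_smul_right, real_inner_comm u'.1 b.2, hu₁,
      inner_add_left, real_inner_smul_left]
  have e₂ : ⟪u'.2, v'.1⟫ = ⟪u.2, v.1⟫ + s * ⟪b.1, u.2⟫ + s * ⟪a.2, v'.1⟫ := by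
    rw [hu₂, inner_add_left, real_inner_smul_left, hv₁, inner_add_right, real_inner_smul_right,
      real_inner_comm b.1]
  unfold symplecticForm
  linear_combination e₁ - e₂ + s * hsymm

theorem symplecticForm_adjointSymplecticEuler_step {B : E × E →L[ℝ] (E × E) →L[ℝ] ℝ}
    (hB : ∀ x y, B x y = B y x) (s : ℝ) {u v u' v' : E × E}
    (hu : u' = u + s • hamiltonianVectorField (B (u.1, u'.2)))
    (hv : v' = v + s • hamiltonianVectorField (B (v.1, v'.2))) :
    symplecticForm u' v' = symplecticForm u v := by
  set a := hamiltonianVectorField (B (u.1, u'.2))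
  set b := hamiltonianVectorField (B (v.1, v'.2))
  have hsymm : ⟪a.1, v'.2⟫ - ⟪a.2, v.1⟫ = ⟪b.1, u'.2⟫ - ⟪b.2, u.1⟫ := by
    have := hB (u.1, u'.2) (v.1, v'.2)
    rwa [← symplecticForm_hamiltonianVectorField, ← symplecticForm_hamiltonianVectorField] at this
  have hu₁ : u'.1 = u.1 + s • a.1 := congrArg Prod.fst hu
  have hu₂ : u'.2 = u.2 + s • a.2 := congrArg Prod.snd hu
  have hv₁ : v'.1 = v.1 + s • b.1 := congrArg Prod.fst hv
  have hv₂ : v'.2 = v.2 + s • b.2 := congrArg Prod.snd hv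
  have e₁ : ⟪u'.1, v'.2⟫ = ⟪u.1, v.2⟫ + s * ⟪b.2, u.1⟫ + s * ⟪a.1, v'.2⟫ := by
    rw [hu₁, inner_add_left, real_inner_smul_left, hv₂, inner_add_right, real_inner_smul_right,
      real_inner_comm u.1]
  have e₂ : ⟪u'.2, v'.1⟫ = ⟪u.2, v.1⟫ + s * ⟪a.2, v.1⟫ + s * ⟪b.1, u'.2⟫ := by
    rw [hv₁, inner_add_right, real_inner_smul_right, real_inner_comm u'.2 b.1, hu₂,
      inner_add_left, real_inner_smul_left]
  unfold symplecticForm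
  linear_combination e₁ - e₂ + s * hsymm

end Symplectic

section Linearization

variable {F G V : Type*} [NormedAddCommGroup F] [NormedSpace ℝ F] [NormedAddCommGroup G]
  [NormedSpace ℝ G] [NormedAddCommGroup V] [NormedSpace ℝ V]

theorem hasFDerivAt_fderiv_comp {H : V → ℝ} (hH : ContDiff ℝ 2 H) {g : F → V} {g' : F →L[ℝ] V}
    {z : F} (hg : HasFDerivAt g g' z) :
    HasFDerivAt (fun w => fderiv ℝ H (g w)) ((fderiv ℝ (fderiv ℝ H) (g z)).comp g') z :=
  ((hH.fderiv_right (m := 1) le_rfl).differentiable one_ne_zero (g z)).hasFDerivAt.comp z hg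

theorem HasFDerivAt.apply_eq_of_eq_add_fderiv_comp {H : V → ℝ} (hH : ContDiff ℝ 2 H)
    (L : (V →L[ℝ] ℝ) →L[ℝ] G) {f a : F → G} {g : F → V} {f' a' : F →L[ℝ] G} {g' : F →L[ℝ] V}
    {z : F} (hf : HasFDerivAt f f' z) (ha : HasFDerivAt a a' z) (hg : HasFDerivAt g g' z)
    (heq : ∀ w, f w = a w + L (fderiv ℝ H (g w))) (x : F) :
    f' x = a' x + L (fderiv ℝ (fderiv ℝ H) (g z) (g' x)) := by
  have hrhs : HasFDerivAt (fun w => a w + L (fderiv ℝ H (g w)))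
      (a' + L ∘L (fderiv ℝ (fderiv ℝ H) (g z)).comp g') z :=
    ha.add (L.hasFDerivAt.comp z (hasFDerivAt_fderiv_comp hH hg))
  rw [hf.unique (hrhs.congr_of_eventuallyEq (.of_forall heq))]
  rfl

end Linearization

/-- The implicit second-order method (7.4) is a contact (symplectic) transformation:
with `q = α + (h/2)·∇₂H₁(q, β)`, `p = β − (h/2)·∇₁H₁(q, β)`,
`P = p − (h/2)·∇₁H₂(q, P)`, `Q = q + (h/2)·∇₂H₂(q, P)`, and `Φ = (Q, P)`
differentiable, the derivative of `Φ` preserves the standard symplectic form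
`ω((a,b),(a',b')) = ⟪a,b'⟫ − ⟪b,a'⟫`. -/
theorem deVogelaere_method_7_4_contact
    (n : ℕ)
    (H₁ H₂ : (EuclideanSpace ℝ (Fin n)) × (EuclideanSpace ℝ (Fin n)) → ℝ)
    (hH₁ : ContDiff ℝ 2 H₁) (hH₂ : ContDiff ℝ 2 H₂) (h : ℝ)
    (q p Q P : (EuclideanSpace ℝ (Fin n)) × (EuclideanSpace ℝ (Fin n)) →
      EuclideanSpace ℝ (Fin n))
    (hqd : Differentiable ℝ q) (hpd : Differentiable ℝ p)
    (hΦ : Differentiable ℝ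
      (fun z : (EuclideanSpace ℝ (Fin n)) × (EuclideanSpace ℝ (Fin n)) => (Q z, P z)))
    (hq : ∀ z : (EuclideanSpace ℝ (Fin n)) × (EuclideanSpace ℝ (Fin n)),
      q z = z.1 + (h / 2) • gradient (fun y => H₁ (q z, y)) z.2)
    (hp : ∀ z : (EuclideanSpace ℝ (Fin n)) × (EuclideanSpace ℝ (Fin n)),
      p z = z.2 - (h / 2) • gradient (fun x => H₁ (x, z.2)) (q z))
    (hP : ∀ z : (EuclideanSpace ℝ (Fin n)) × (EuclideanSpace ℝ (Fin n)),
      P z = p z - (h / 2) • gradient (fun x => H₂ (x, P z)) (q z))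
    (hQ : ∀ z : (EuclideanSpace ℝ (Fin n)) × (EuclideanSpace ℝ (Fin n)),
      Q z = q z + (h / 2) • gradient (fun y => H₂ (q z, y)) (P z)) :
    ∀ (z u v : (EuclideanSpace ℝ (Fin n)) × (EuclideanSpace ℝ (Fin n))),
      ⟪(fderiv ℝ (fun w => (Q w, P w)) z u).1, (fderiv ℝ (fun w => (Q w, P w)) z v).2⟫
        - ⟪(fderiv ℝ (fun w => (Q w, P w)) z u).2,
            (fderiv ℝ (fun w => (Q w, P w)) z v).1⟫
      = ⟪u.1, v.2⟫ - ⟪u.2, v.1⟫ := by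
  intro z u v
  have hΨeq : ∀ w,
      (q w, p w) = w + (h / 2) • hamiltonianVectorField (fderiv ℝ H₁ (q w, w.2)) :=
    fun w => prodMk_eq_add_smul_hamiltonianVectorField
      (hH₁.differentiable two_ne_zero _) (hq w) (hp w)
  have hΦeq : ∀ w,
      (Q w, P w) = (q w, p w) + (h / 2) • hamiltonianVectorField (fderiv ℝ H₂ (q w, P w)) :=
    fun w => prodMk_eq_add_smul_hamiltonianVectorField
      (hH₂.differentiable two_ne_zero _) (hQ w) (hP w)
  have hq' := (hqd z).hasFDerivAt
  have hΨ' := hq'.prodMk (hpd z).hasFDerivAt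
  have hΦ' := (hΦ z).hasFDerivAt
  have step₁ := hΨ'.apply_eq_of_eq_add_fderiv_comp hH₁ ((h / 2) • hamiltonianVectorField)
    (hasFDerivAt_id z) (hq'.prodMk hasFDerivAt_snd) hΨeq
  have step₂ := hΦ'.apply_eq_of_eq_add_fderiv_comp hH₂ ((h / 2) • hamiltonianVectorField)
    hΨ' (hq'.prodMk hΦ'.snd) hΦeq
  have hB₁ := (hH₁.contDiffAt (x := (q z, z.2))).isSymmSndFDerivAt (by simp)
  have hB₂ := (hH₂.contDiffAt (x := (q z, P z))).isSymmSndFDerivAt (by simp)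
  calc symplecticForm (fderiv ℝ (fun w => (Q w, P w)) z u) (fderiv ℝ (fun w => (Q w, P w)) z v)
      = symplecticForm (fderiv ℝ q z u, fderiv ℝ p z u) (fderiv ℝ q z v, fderiv ℝ p z v) :=
        symplecticForm_adjointSymplecticEuler_step hB₂ _ (step₂ u) (step₂ v)
    _ = symplecticForm u v := symplecticForm_symplecticEuler_step hB₁ _ (step₁ u) (step₁ v)
end
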